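/- Let ⊗ be a continuous t-norm on [0,1] and let u, v ∈ [0,1] with u⊗v = 0. Then either u = 0 or there exists n ∈ ℕ, n ≥ 1, with vⁿ = 0 (the n-fold ⊗-power of v). Consequently, if ⊗ has no nilpotent elements, then u = 0 or v = 0. -/
import Mathlib

open unitInterval Set

/-- A continuous t-norm on the unit interval `[0,1]`. -/
structure ContinuousTNorm where
  mul : I → I → I
  comm : ∀ x y, mul x y = mul y x
  assoc : ∀ x y z, mul (mul x y) z = mul x (mul y z)
  mono : ∀ ⦃x₁ x₂ y₁ y₂ : I⦄, x₁ ≤ x₂ → y₁ ≤ y₂ → mul x₁ y₁ ≤ mul x₂ y₂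
  continuous : Continuous fun p : I × I => mul p.1 p.2
  one_mul' : ∀ x, mul 1 x = x

/-- The `n`-fold `⊗`-power `xⁿ`. -/
def ContinuousTNorm.pow (T : ContinuousTNorm) (x : I) : ℕ → I
  | 0 => 1
  | n + 1 => T.mul x (T.pow x n)

noncomputable instance : CompleteLinearOrder I := by
  haveI : Fact ((0:ℝ) ≤ 1) := ⟨zero_le_one⟩
  exact inferInstanceAs (CompleteLinearOrder (Set.Icc (0:ℝ) 1))

namespace ContinuousTNorm

variable (T : ContinuousTNorm)

lemma mul_one (x : I) : T.mul x 1 = x := by rw [T.comm]; exact T.one_mul' x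

lemma mul_le_right (x y : I) : T.mul x y ≤ y := by
  calc T.mul x y ≤ T.mul 1 y := T.mono le_top le_rfl
  _ = y := T.one_mul' y

lemma mul_le_left (x y : I) : T.mul x y ≤ x := by
  rw [T.comm]; exact T.mul_le_right y x

lemma zero_mul (x : I) : T.mul 0 x = 0 :=
  le_antisymm (T.mul_le_left 0 x) bot_le

lemma pow_antitone (v : I) : Antitone (T.pow v) := by
  have key : ∀ n, T.pow v (n + 1) ≤ T.pow v n := by
    intro n
    calc T.pow v (n+1) = T.mul v (T.pow v n) := rfl
    _ ≤ T.pow v n := T.mul_le_right _ _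
  exact antitone_nat_of_succ_le key

lemma cont_right (x : I) : Continuous (fun y => T.mul x y) :=
  T.continuous.comp (Continuous.prodMk_right x)

lemma cont_left (y : I) : Continuous (fun x => T.mul x y) :=
  T.continuous.comp (Continuous.prodMk_left y)

end ContinuousTNorm

/-- If `u ⊗ v = 0` for a continuous t-norm, then `u = 0` or `vⁿ = 0` for some `n ≥ 1`;
consequently, if `⊗` has no nilpotent elements, then `u = 0` or `v = 0`. -/
theorem tnorm_no_zero_divisors (T : ContinuousTNorm) :
    (∀ u v : I, T.mul u v = 0 → u = 0 ∨ ∃ n : ℕ, 1 ≤ n ∧ T.pow v n = 0) ∧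
    ((∀ x : I, x ≠ 0 → ∀ n : ℕ, T.pow x n ≠ 0) →
      ∀ u v : I, T.mul u v = 0 → u = 0 ∨ v = 0) := by
  have main : ∀ u v : I, T.mul u v = 0 → u = 0 ∨ ∃ n : ℕ, 1 ≤ n ∧ T.pow v n = 0 := by
    intro u v huv
    by_cases hu : u = 0
    · exact Or.inl hu
    set L : I := ⨅ n, T.pow v n with hL
    have hmono := T.pow_antitone v
    have hlim : Filter.Tendsto (T.pow v) Filter.atTop (nhds L) :=
      tendsto_atTop_ciInf hmono (OrderBot.bddBelow _)
    have hLle : ∀ n, L ≤ T.pow v n := fun n => iInf_le _ n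
    have hLv : L ≤ v := by
      have := hLle 1
      rwa [show T.pow v 1 = v by simp [ContinuousTNorm.pow, T.mul_one]] at this
    -- v ⊗ L = L
    have hvL : T.mul v L = L := by
      have h1 : Filter.Tendsto (fun n => T.mul v (T.pow v n)) Filter.atTop
          (nhds (T.mul v L)) := ((T.cont_right v).tendsto L).comp hlim
      have h2 : Filter.Tendsto (fun n => T.mul v (T.pow v n)) Filter.atTop (nhds L) := by
        have : (fun n => T.mul v (T.pow v n)) = fun n => T.pow v (n + 1) := rfl
        rw [this]
        exact hlim.comp (Filter.tendsto_add_atTop_nat 1)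
      exact tendsto_nhds_unique h1 h2
    -- pow v n ⊗ L = L
    have hpowL : ∀ n, T.mul (T.pow v n) L = L := by
      intro n
      induction n with
      | zero => exact T.one_mul' L
      | succ n ih =>
        calc T.mul (T.pow v (n+1)) L = T.mul (T.mul v (T.pow v n)) L := rfl
        _ = T.mul v (T.mul (T.pow v n) L) := T.assoc _ _ _
        _ = T.mul v L := by rw [ih]
        _ = L := hvL
    -- L ⊗ L = L
    have hLL : T.mul L L = L := by
      have h1 : Filter.Tendsto (fun n => T.mul (T.pow v n) L) Filter.atTop
          (nhds (T.mul L L)) := ((T.cont_left L).tendsto L).comp hlim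
      have h2 : Filter.Tendsto (fun n => T.mul (T.pow v n) L) Filter.atTop (nhds L) := by
        simp only [hpowL]; exact tendsto_const_nhds
      exact tendsto_nhds_unique h1 h2
    rcases le_or_gt L u with hle | hlt
    · -- L = 0 and then some power drops below u
      have hL0 : L = 0 := by
        have : L ≤ 0 := by
          calc L = T.mul L L := hLL.symm
          _ ≤ T.mul u v := T.mono hle hLv
          _ = 0 := huv
        exact le_antisymm this bot_le
      have hu0 : (0 : I) < u := lt_of_le_of_ne bot_le (Ne.symm hu)
      rw [hL0] at hlim
      obtain ⟨n, hn⟩ := (hlim.eventually_lt_const hu0).exists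
      refine Or.inr ⟨n + 1, Nat.le_add_left 1 n, ?_⟩
      have : T.pow v (n + 1) ≤ 0 := by
        calc T.pow v (n+1) = T.mul v (T.pow v n) := rfl
        _ ≤ T.mul v u := T.mono le_rfl hn.le
        _ = T.mul u v := T.comm v u
        _ = 0 := huv
      exact le_antisymm this bot_le
    · -- u < L : show u ⊗ L = u via IVT, then u = 0
      exfalso
      have hivt : u ∈ range (fun t : I => T.mul t L) := by
        apply intermediate_value_univ (0 : I) (1 : I) (T.cont_left L)
        constructor
        · rw [T.zero_mul]; exact bot_le
        · rw [T.one_mul']; exact hlt.le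
      obtain ⟨t, ht⟩ := hivt
      change T.mul t L = u at ht
      have huL : T.mul u L = u := by
        calc T.mul u L = T.mul (T.mul t L) L := by rw [ht]
        _ = T.mul t (T.mul L L) := T.assoc _ _ _
        _ = T.mul t L := by rw [hLL]
        _ = u := ht
      have : u ≤ 0 := by
        calc u = T.mul u L := huL.symm
        _ ≤ T.mul u v := T.mono le_rfl hLv
        _ = 0 := huv
      exact hu (le_antisymm this bot_le)
  refine ⟨main, fun hnil u v huv => ?_⟩
  rcases main u v huv with h | ⟨n, _, hn⟩
  · exact Or.inl h
  · by_cases hv : v = 0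
    · exact Or.inr hv
    · exact absurd hn (hnil v hv n)
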